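/- arXiv:2602.11883 — 3 statements merged into one kernel-verified Lean document; each statement's English description precedes it below -/
import Mathlib

section
/- Let W be a finite-dimensional real inner product space and let P : W → ℝ be a function of the form P(v) = B(v,v) + L(v) + c, where B is a symmetric bilinear form, L is a linear form, and c ∈ ℝ. If P vanishes identically on the sphere S_r = {v ∈ W : ⟨v,v⟩ = r²} for some r > 0 and dim W ≥ 2, then L = 0, B = λ⟨·,·⟩ for a constant λ, and λ r² + c = 0. -/
open scoped RealInnerProductSpace

/-- If `P(v) = B(v,v) + L(v) + c` (with `B` symmetric bilinear, `L` linear)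
vanishes identically on the sphere `{v : ⟪v,v⟫ = r²}` with `r > 0` in an inner
product space of dimension `≥ 2`, then `L = 0`, `B = λ⟪·,·⟫` and `λ r² + c = 0`. -/
theorem stmt_4 {W : Type*} [NormedAddCommGroup W] [InnerProductSpace ℝ W]
    [FiniteDimensional ℝ W] (hdim : 2 ≤ Module.finrank ℝ W)
    (B : W →ₗ[ℝ] W →ₗ[ℝ] ℝ) (hB : ∀ v w, B v w = B w v)
    (L : W →ₗ[ℝ] ℝ) (c r : ℝ) (hr : 0 < r)
    (hP : ∀ v : W, ⟪v, v⟫ = r ^ 2 → B v v + L v + c = 0) :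
    L = 0 ∧ ∃ lam : ℝ, (∀ v w, B v w = lam * ⟪v, w⟫) ∧ lam * r ^ 2 + c = 0 := by
  -- For v on the sphere, -v is also on the sphere; subtracting the two
  -- equations kills the quadratic and constant parts, giving `L v = 0`.
  have hLsph : ∀ v : W, ⟪v, v⟫ = r ^ 2 → L v = 0 := by
    intro v hv
    have h1 := hP v hv
    have h2 := hP (-v) (by simpa using hv)
    have hB' : B (-v) (-v) = B v v := by simp
    have hL' : L (-v) = -L v := by simp
    rw [hB', hL'] at h2
    linarith
  have hBsph : ∀ v : W, ⟪v, v⟫ = r ^ 2 → B v v = -c := by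
    intro v hv
    have h1 := hP v hv
    have := hLsph v hv
    linarith
  -- Scale an arbitrary nonzero vector onto the sphere.
  have hscale : ∀ v : W, v ≠ 0 → ⟪(r / ‖v‖) • v, (r / ‖v‖) • v⟫ = r ^ 2 := by
    intro v hv
    have hn : ‖v‖ ≠ 0 := norm_ne_zero_iff.mpr hv
    rw [real_inner_smul_left, real_inner_smul_right, real_inner_self_eq_norm_sq]
    field_simp
  have hL0 : ∀ v : W, L v = 0 := by
    intro v
    rcases eq_or_ne v 0 with rfl | hv
    · simp
    · have := hLsph _ (hscale v hv)
      rw [map_smul, smul_eq_mul] at this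
      have hn : ‖v‖ ≠ 0 := norm_ne_zero_iff.mpr hv
      have hrn : r / ‖v‖ ≠ 0 := div_ne_zero hr.ne' hn
      exact (mul_eq_zero.mp this).resolve_left hrn
  refine ⟨LinearMap.ext hL0, -c / r ^ 2, ?_, by field_simp; ring⟩
  have hdiag : ∀ v : W, B v v = (-c / r ^ 2) * ⟪v, v⟫ := by
    intro v
    rcases eq_or_ne v 0 with rfl | hv
    · simp
    · have h := hBsph _ (hscale v hv)
      have hn : ‖v‖ ≠ 0 := norm_ne_zero_iff.mpr hv
      have hinner : ⟪v, v⟫ = ‖v‖ ^ 2 := real_inner_self_eq_norm_sq v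
      rw [map_smul, map_smul, LinearMap.smul_apply, smul_eq_mul, smul_eq_mul] at h
      rw [hinner]
      have hr2 : r ^ 2 ≠ 0 := pow_ne_zero 2 hr.ne'
      field_simp at h ⊢
      nlinarith [h]
  intro v w
  have h := hdiag (v + w)
  have hv := hdiag v
  have hw := hdiag w
  have hexp : B (v + w) (v + w) = B v v + 2 * B v w + B w w := by
    simp [map_add, LinearMap.add_apply, hB v w]
    ring
  have hip : ⟪v + w, v + w⟫ = ⟪v, v⟫ + 2 * ⟪v, w⟫ + ⟪w, w⟫ := by
    rw [inner_add_add_self]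
    ring_nf
    rw [real_inner_comm w v]
    ring
  rw [hexp, hip] at h
  linarith [h, hv, hw]
end

section
/- Suppose, on a timelike hypersurface with tangent space V of dimension n-1 at a point (ambient dimension n ≥ 3), the second fundamental form satisfies Π(u,u) = -ρ ω(u) for all admissible u (i.e., all u = ακ + v with α = E/κ², v ∈ κ^⊥, g(v,v) = E²/κ² - 1 > 0). Then: (i) Π(κ, v) = -(ρκ²/(2E)) ω(v) for all v ∈ κ^⊥; (ii) Π restricted to κ^⊥ × κ^⊥ equals λ·g|_{κ^⊥} with λ = H_κ/(n-2) where H_κ is the trace of Π on κ^⊥; (iii) Π(κ,κ) = -(H_κ/(n-2))(κ² - κ⁴/E²) - (ρκ²/E) ω(κ). Consequently Π = (H_κ/(n-2))(g + E^{-2}κ^♭⊗κ^♭) + (ρ/E)·(1/2)(ω⊗κ^♭ + κ^♭⊗ω). -/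
/-- Extrinsic characterization (2) ⇒ (3) of massive particle surfaces,
pointwise linear-algebra version. `V` is the tangent space (dimension `n-1`,
ambient dimension `n ≥ 3`) with Lorentzian `g`: `g(κ,κ) = -κ² < 0` and `g`
positive definite on `κ⊥`. If the second fundamental form `II` satisfies
`II(u,u) = -ρ ω(u)` for all admissible `u` (`g(u,u) = -1`, `g(u,κ) = -E`,
`E² > κ²`), then (with `λ = H_κ/(n-2)`, `H_κ` the trace of `II` on `κ⊥`):
(i) `II(κ,v) = -(ρκ²/(2E)) ω(v)` on `κ⊥`;
(ii) `II = λ g` on `κ⊥ × κ⊥`;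
(iii) `II(κ,κ) = -λ(κ² - κ⁴/E²) - (ρκ²/E) ω(κ)`; and consequently
`II = λ (g + E⁻² κ♭⊗κ♭) + (ρ/E)·½(ω⊗κ♭ + κ♭⊗ω)`. -/
theorem stmt_8 {V : Type*} [AddCommGroup V] [Module ℝ V]
    [Module.Finite ℝ V]
    (n : ℕ) (hn : 3 ≤ n) (hdim : Module.finrank ℝ V = n - 1)
    (g : V →ₗ[ℝ] V →ₗ[ℝ] ℝ) (hgsym : ∀ v w, g v w = g w v)
    (κ : V) (κsq : ℝ) (hκ : g κ κ = -κsq) (hpos : 0 < κsq)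
    (hposdef : ∀ v : V, g v κ = 0 → v ≠ 0 → 0 < g v v)
    (E : ℝ) (hE : κsq < E ^ 2)
    (ω : V →ₗ[ℝ] ℝ) (ρ : ℝ)
    (II : V →ₗ[ℝ] V →ₗ[ℝ] ℝ) (hIIsym : ∀ v w, II v w = II w v)
    (hadm : ∀ u : V, g u u = -1 → g u κ = -E → II u u = -ρ * ω u) :
    ∃ lam : ℝ,
      (∀ v, g v κ = 0 → II κ v = -(ρ * κsq / (2 * E)) * ω v) ∧
      (∀ v w, g v κ = 0 → g w κ = 0 → II v w = lam * g v w) ∧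
      II κ κ = -lam * (κsq - κsq ^ 2 / E ^ 2) - (ρ * κsq / E) * ω κ ∧
      (∀ u w : V, II u w
        = lam * (g u w + (E ^ 2)⁻¹ * (g κ u * g κ w))
          + (ρ / E) * ((1 : ℝ) / 2) * (ω u * g κ w + g κ u * ω w)) := by
  have hκ0 : κsq ≠ 0 := ne_of_gt hpos
  have hE2pos : (0:ℝ) < E ^ 2 := lt_trans hpos hE
  have hE0 : E ≠ 0 := by
    intro h; rw [h] at hE2pos; simp at hE2pos
  have hr2 : (0:ℝ) < E ^ 2 / κsq - 1 := by
    have : (1:ℝ) < E ^ 2 / κsq := (one_lt_div hpos).2 hE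
    linarith
  -- key lemma on the sphere
  have key : ∀ v : V, g v κ = 0 → g v v = E ^ 2 / κsq - 1 →
      II κ v = -(ρ * κsq / (2 * E)) * ω v ∧
      (E / κsq) ^ 2 * II κ κ + II v v = -(ρ * ((E / κsq) * ω κ)) := by
    intro v hv hvv
    have hκv : g κ v = 0 := by rw [hgsym]; exact hv
    have h1P : g ((E / κsq) • κ + v) ((E / κsq) • κ + v) = -1 := by
      simp only [map_add, map_smul, LinearMap.add_apply, LinearMap.smul_apply,
        smul_eq_mul, hκ, hv, hκv, hvv]
      field_simp
      ring
    have h2P : g ((E / κsq) • κ + v) κ = -E := by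
      simp only [map_add, map_smul, LinearMap.add_apply, LinearMap.smul_apply,
        smul_eq_mul, hκ, hv]
      field_simp
      ring
    have h1M : g ((E / κsq) • κ - v) ((E / κsq) • κ - v) = -1 := by
      simp only [map_sub, map_add, map_smul, LinearMap.sub_apply, LinearMap.add_apply,
        LinearMap.smul_apply, smul_eq_mul, hκ, hv, hκv, hvv]
      field_simp
      ring
    have h2M : g ((E / κsq) • κ - v) κ = -E := by
      simp only [map_sub, map_smul, LinearMap.sub_apply, LinearMap.smul_apply,
        smul_eq_mul, hκ, hv]
      field_simp
      ring
    have hadmP := hadm _ h1P h2P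
    have hadmM := hadm _ h1M h2M
    have eP : (E / κsq) ^ 2 * II κ κ + 2 * (E / κsq) * II κ v + II v v
        = -(ρ * ((E / κsq) * ω κ + ω v)) := by
      simp only [map_add, map_smul, LinearMap.add_apply, LinearMap.smul_apply,
        smul_eq_mul, hIIsym v κ] at hadmP
      linear_combination hadmP
    have eM : (E / κsq) ^ 2 * II κ κ - 2 * (E / κsq) * II κ v + II v v
        = -(ρ * ((E / κsq) * ω κ - ω v)) := by
      simp only [map_sub, map_smul, LinearMap.sub_apply, LinearMap.smul_apply,
        smul_eq_mul, hIIsym v κ] at hadmM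
      linear_combination hadmM
    constructor
    · have h : (E / κsq) * II κ v = -(ρ / 2) * ω v := by
        linear_combination (eP - eM) / 4
      field_simp at h ⊢
      linear_combination h
    · linear_combination (eP + eM) / 2
  -- scaling to the sphere
  have scale : ∀ v : V, g v κ = 0 → v ≠ 0 → ∃ s : ℝ, 0 < s ∧
      s ^ 2 * g v v = E ^ 2 / κsq - 1 ∧ g (s • v) κ = 0 ∧
      g (s • v) (s • v) = E ^ 2 / κsq - 1 := by
    intro v hv hv0
    have ht : 0 < g v v := hposdef v hv hv0
    refine ⟨Real.sqrt ((E ^ 2 / κsq - 1) / g v v), Real.sqrt_pos.2 (div_pos hr2 ht), ?_, ?_, ?_⟩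
    · rw [Real.sq_sqrt (le_of_lt (div_pos hr2 ht))]
      field_simp
    · simp [map_smul, hv]
    · simp only [map_smul, LinearMap.smul_apply, smul_eq_mul]
      rw [show ∀ s : ℝ, s * (s * g v v) = s ^ 2 * g v v from fun s => by ring,
        Real.sq_sqrt (le_of_lt (div_pos hr2 ht))]
      field_simp
  -- part (i)
  have part1 : ∀ v, g v κ = 0 → II κ v = -(ρ * κsq / (2 * E)) * ω v := by
    intro v hv
    rcases eq_or_ne v 0 with rfl | hv0
    · simp
    · obtain ⟨s, hspos, hs2, hsvκ, hsv⟩ := scale v hv hv0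
      have hk := (key (s • v) hsvκ hsv).1
      simp only [map_smul, smul_eq_mul] at hk
      apply mul_left_cancel₀ (ne_of_gt hspos)
      linear_combination hk
  -- the constant
  obtain ⟨lam, hlam2⟩ : ∃ lam : ℝ, lam * (E ^ 2 / κsq - 1)
      = -(ρ * ((E / κsq) * ω κ)) - (E / κsq) ^ 2 * II κ κ :=
    ⟨(-(ρ * ((E / κsq) * ω κ)) - (E / κsq) ^ 2 * II κ κ) / (E ^ 2 / κsq - 1),
      div_mul_cancel₀ _ (ne_of_gt hr2)⟩
  have part2a : ∀ v, g v κ = 0 → II v v = lam * g v v := by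
    intro v hv
    rcases eq_or_ne v 0 with rfl | hv0
    · simp
    · obtain ⟨s, hspos, hs2, hsvκ, hsv⟩ := scale v hv hv0
      have hk := (key (s • v) hsvκ hsv).2
      simp only [map_smul, LinearMap.smul_apply, smul_eq_mul] at hk
      have hss : s ^ 2 * II v v = s ^ 2 * (lam * g v v) := by
        calc s ^ 2 * II v v
            = -(ρ * ((E / κsq) * ω κ)) - (E / κsq) ^ 2 * II κ κ := by linear_combination hk
          _ = lam * (E ^ 2 / κsq - 1) := hlam2.symm
          _ = lam * (s ^ 2 * g v v) := by rw [hs2]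
          _ = s ^ 2 * (lam * g v v) := by ring
      exact mul_left_cancel₀ (pow_ne_zero 2 (ne_of_gt hspos)) hss
  have part2 : ∀ v w, g v κ = 0 → g w κ = 0 → II v w = lam * g v w := by
    intro v w hv hw
    have hvw : g (v + w) κ = 0 := by
      simp only [map_add, LinearMap.add_apply, hv, hw, add_zero]
    have h1 := part2a v hv
    have h2 := part2a w hw
    have h3 := part2a (v + w) hvw
    simp only [map_add, LinearMap.add_apply] at h3
    linear_combination (h3 - h1 - h2) / 2 - (hIIsym w v) / 2 + (lam / 2) * (hgsym w v)
  -- existence of a nonzero vector orthogonal to κ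
  obtain ⟨v0, hv0κ, hv00⟩ : ∃ v0 : V, g v0 κ = 0 ∧ v0 ≠ 0 := by
    set φ : V →ₗ[ℝ] ℝ := (LinearMap.flip g) κ with hφ
    have hker : 0 < Module.finrank ℝ (LinearMap.ker φ) := by
      have h1 := LinearMap.finrank_range_add_finrank_ker φ
      have h2 : Module.finrank ℝ (LinearMap.range φ) ≤ 1 := by
        have := Submodule.finrank_le (LinearMap.range φ)
        simpa using this
      omega
    rw [Module.finrank_pos_iff] at hker
    obtain ⟨⟨x, hx⟩, hx0⟩ := exists_ne (0 : LinearMap.ker φ)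
    refine ⟨x, hx, ?_⟩
    intro h
    apply hx0
    ext
    exact h
  obtain ⟨s0, hs0pos, hs02, hsv0κ, hsv0⟩ := scale v0 hv0κ hv00
  have hkey2 := (key (s0 • v0) hsv0κ hsv0).2
  have h2a := part2a (s0 • v0) hsv0κ
  rw [hsv0] at h2a
  have hc : (E / κsq) ^ 2 * II κ κ + lam * (E ^ 2 / κsq - 1) = -(ρ * ((E / κsq) * ω κ)) := by
    linear_combination hkey2 - h2a
  have part3 : II κ κ = -lam * (κsq - κsq ^ 2 / E ^ 2) - (ρ * κsq / E) * ω κ := by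
    field_simp at hc
    have hcP : E ^ 2 * II κ κ + lam * (E ^ 2 * κsq - κsq ^ 2) = -(ρ * E * κsq * ω κ) := by
      have h9 : κsq ^ 2 * (E ^ 2 * II κ κ + lam * (E ^ 2 * κsq - κsq ^ 2))
          = κsq ^ 2 * (-(ρ * E * κsq * ω κ)) := by linear_combination κsq ^ 2 * hc
      exact mul_left_cancel₀ (pow_ne_zero 2 hκ0) h9
    field_simp
    linear_combination hcP
  refine ⟨lam, part1, part2, part3, ?_⟩
  -- decomposition
  have decomp : ∀ x : V, ∃ a : ℝ, ∃ v : V, x = a • κ + v ∧ g v κ = 0 := by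
    intro x
    refine ⟨-(g x κ) / κsq, x - (-(g x κ) / κsq) • κ, by abel, ?_⟩
    simp only [map_sub, map_smul, LinearMap.sub_apply, LinearMap.smul_apply, smul_eq_mul, hκ]
    field_simp
    ring
  intro u w
  obtain ⟨a, v, hu, hv⟩ := decomp u
  obtain ⟨b, w', hw, hw'⟩ := decomp w
  have hκv : g κ v = 0 := by rw [hgsym]; exact hv
  have hκw' : g κ w' = 0 := by rw [hgsym]; exact hw'
  rw [hu, hw]
  simp only [map_add, map_smul, LinearMap.add_apply, LinearMap.smul_apply, smul_eq_mul,
    hκ, hv, hw', hκv, hκw', hIIsym v κ, hIIsym w' κ]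
  linear_combination (a * b) * part3 + a * (part1 w' hw') + b * (part1 v hv)
    + part2 v w' hv hw'
end

section
/- Let γ be a timelike solution (parametrized so that (1/2)g(γ',γ') = e) of the Lorentz force equation in a standard stationary spacetime M = ℝ × S with g = −β(dt − ω̂)² + h₀ and stationary potential 𝒜 identified with (φ, A). Writing γ = (t, x) and assuming the conserved energy ε = β(ṫ − ω̂(ẋ) + ρχ(x)) with χ = φ − ω̂(A), the function t satisfies ṫ = ε/β + ω̂(ẋ) − ρχ(x), and along γ one has the pointwise identity (1/2)h₀(ẋ,ẋ) + V(x) = e, where V = −(ε − ρβχ)²/(2β). -/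
/-- Along a timelike solution `γ = (t,x)` of the Lorentz force equation in a
standard stationary spacetime (`g = -β(dt - ω̂)² + h₀`, stationary potential
`(φ,A)`, `χ = φ - ω̂(A)`), parametrized so that `½ g(γ',γ') = e` and with
conserved energy `ε = β(ṫ - ω̂(ẋ) + ρχ(x))`, one has
`ṫ = ε/β + ω̂(ẋ) - ρχ(x)` and `½ h₀(ẋ,ẋ) + V(x) = e` where
`V = -(ε - ρβχ)²/(2β)`. Data along the curve: `t' s = ṫ(s)`,
`ωx s = ω̂(ẋ(s))`, `hx s = h₀(ẋ(s),ẋ(s))`, `βs s = β(x s)`,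
`χs s = χ(x s)`. -/
theorem stmt_18
    (t' ωx hx βs χs : ℝ → ℝ) (e ε ρ : ℝ)
    (hβ : ∀ s, 0 < βs s)
    (hε : ∀ s, ε = βs s * (t' s - ωx s + ρ * χs s))
    (he : ∀ s, (1/2 : ℝ) * (-(βs s * (t' s - ωx s) ^ 2) + hx s) = e) :
    ∀ s, t' s = ε / βs s + ωx s - ρ * χs s
      ∧ (1/2 : ℝ) * hx s + (-(ε - ρ * βs s * χs s) ^ 2 / (2 * βs s)) = e := by
  intro s
  have hb := (hβ s).ne'
  constructor
  · field_simp
    linarith [hε s]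
  · have h1 : ε - ρ * βs s * χs s = βs s * (t' s - ωx s) := by linarith [hε s]
    have h2 : hx s = 2 * e + βs s * (t' s - ωx s) ^ 2 := by linarith [he s]
    rw [h1, h2]
    field_simp
    ring
end
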